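/- arXiv:1603.05675 — 2 statements merged into one kernel-verified Lean document; each statement's English description precedes it below -/
import Mathlib

section
/- The moment generating function of X ∼ GH(λ, α, β, δ, μ) is M(t) = E[e^{tX}] = e^{μt}·(γ^λ/(α²−(β+t)²)^{λ/2})·K_λ(δ√(α²−(β+t)²))/K_λ(δγ), valid for all t with |β+t| < α, where γ = √(α²−β²). -/
/-!
The generalized hyperbolic law is a normal variance-mean mixture with a generalized inverse
Gaussian mixing law: up to constants, `exp (b y) (δ² + y²)^{(λ-1/2)/2} K_{λ-1/2}(α √(δ² + y²))`
is `∫₀^∞ exp (b y) w^{λ-3/2} exp (-(α² w + (δ² + y²) / w) / 2) dw`. Integrating out `y` first is a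
Gaussian integral, which turns `α²` into `α² - b²`, and the remaining `w`-integral is again a GIG
normalizing constant, computed through `w = s eᵘ` from the integral representation of `K_λ`.
So `∫ exp (b y) ⋯ dy = √(2π) α^{λ-1/2} δ^λ (α² - b²)^{-λ/2} K_λ(δ √(α² - b²))` whenever `|b| < α`,
and the moment generating function is `e^{μt}` times the ratio of these at `b = β + t` and `b = β`.
-/

open Real MeasureTheory Filter Asymptotics
open scoped ENNReal

/-- Modified Bessel function of the first kind of order `ν`. -/
noncomputable def besselI (ν x : ℝ) : ℝ :=
  ∑' k : ℕ, (x / 2) ^ (ν + 2 * (k : ℝ)) / (Real.Gamma (ν + (k : ℝ) + 1) * (Nat.factorial k : ℝ))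

/-- Modified Bessel function of the second kind of order `ν`. -/
noncomputable def besselK (ν x : ℝ) : ℝ :=
  ∫ t in Set.Ioi (0 : ℝ), Real.exp (-x * Real.cosh t) * Real.cosh (ν * t)

/-- Density of the generalized hyperbolic distribution GH(λ, α, β, δ, μ). -/
noncomputable def ghPdf (lam α β δ μ x : ℝ) : ℝ :=
  ((α ^ 2 - β ^ 2) ^ (lam / 2) /
      (Real.sqrt (2 * Real.pi) * α ^ (lam - 1 / 2) * δ ^ lam *
        besselK lam (δ * Real.sqrt (α ^ 2 - β ^ 2)))) *
    Real.exp (β * (x - μ)) * (δ ^ 2 + (x - μ) ^ 2) ^ ((lam - 1 / 2) / 2) *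
    besselK (lam - 1 / 2) (α * Real.sqrt (δ ^ 2 + (x - μ) ^ 2))

/-- Density of the generalized inverse Gaussian distribution GIG(λ, a, b). -/
noncomputable def gigPdf (lam a b x : ℝ) : ℝ :=
  if 0 < x then
    (a / b) ^ (lam / 2) * (1 / (2 * besselK lam (Real.sqrt (a * b)))) *
      x ^ (lam - 1) * Real.exp (-(a * x + b / x) / 2)
  else 0

lemma sq_sub_sq_pos_of_abs_lt {α b : ℝ} (h : |b| < α) : 0 < α ^ 2 - b ^ 2 := by
  nlinarith [abs_nonneg b, sq_abs b]

lemma one_add_sq_div_four_le_cosh (t : ℝ) : 1 + t ^ 2 / 4 ≤ cosh t := by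
  rw [← cosh_abs, cosh_eq]
  nlinarith [quadratic_le_exp_of_nonneg (abs_nonneg t), add_one_le_exp (-|t|), sq_abs t]

lemma cosh_le_exp_abs (x : ℝ) : cosh x ≤ exp |x| := by
  rw [cosh_eq]
  linarith [exp_le_exp.2 (le_abs_self x), exp_le_exp.2 (neg_le_abs x)]

lemma integrable_exp_neg_mul_cosh_mul_cosh (ν : ℝ) {x : ℝ} (hx : 0 < x) :
    Integrable fun t => exp (-x * cosh t) * cosh (ν * t) := by
  refine ((integrable_exp_neg_mul_sq (by positivity : 0 < x / 8)).const_mul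
    (exp (2 * ν ^ 2 / x - x))).mono' (by fun_prop) (Eventually.of_forall fun t => ?_)
  have hνt : |ν * t| ≤ 2 * ν ^ 2 / x + x / 8 * t ^ 2 := by
    have : x * |ν * t| ≤ 2 * ν ^ 2 + x ^ 2 / 8 * t ^ 2 := by
      rw [abs_mul, ← sq_abs ν, ← sq_abs t]
      nlinarith [sq_nonneg (2 * |ν| - x * |t| / 2)]
    rw [div_add' _ _ _ hx.ne', le_div_iff₀ hx]
    linarith
  rw [norm_of_nonneg (by positivity), ← exp_add]
  calc exp (-x * cosh t) * cosh (ν * t) ≤ exp (-x * cosh t) * exp |ν * t| := by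
        gcongr; exact cosh_le_exp_abs _
    _ = exp (-x * cosh t + |ν * t|) := (exp_add _ _).symm
    _ ≤ _ := exp_le_exp.2 <| by
        nlinarith [mul_le_mul_of_nonneg_left (one_add_sq_div_four_le_cosh t) hx.le]

lemma besselK_nonneg (ν x : ℝ) : 0 ≤ besselK ν x :=
  setIntegral_nonneg measurableSet_Ioi fun _ _ => mul_nonneg (exp_pos _).le (cosh_pos _).le

lemma measurable_besselK (ν : ℝ) : Measurable (besselK ν) :=
  (StronglyMeasurable.integral_prod_right'
    (f := fun q : ℝ × ℝ => exp (-q.1 * cosh q.2) * cosh (ν * q.2))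
    (by fun_prop : Continuous _).stronglyMeasurable).measurable

lemma lintegral_eq_setLIntegral_Ioi_add_comp_neg {f : ℝ → ℝ≥0∞} (hf : Measurable f) :
    ∫⁻ x, f x = ∫⁻ x in Set.Ioi 0, (f x + f (-x)) := by
  have hneg : ∫⁻ x in Set.Ioi 0, f (-x) = ∫⁻ x in Set.Iio 0, f x := by
    rw [show Set.Iio (0 : ℝ) = Neg.neg '' Set.Ioi 0 by simp,
      lintegral_image_eq_lintegral_abs_deriv_mul measurableSet_Ioi
        (fun x _ => (hasDerivAt_neg x).hasDerivWithinAt) neg_injective.injOn]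
    simp
  rw [lintegral_add_left hf, hneg, setLIntegral_congr Iio_ae_eq_Iic, ← Set.compl_Ioi,
    lintegral_add_compl _ measurableSet_Ioi]

lemma setLIntegral_Ioi_eq_lintegral_comp_mul_exp {s : ℝ} (hs : 0 < s) (g : ℝ → ℝ≥0∞) :
    ∫⁻ w in Set.Ioi 0, g w = ∫⁻ u, ENNReal.ofReal (s * exp u) * g (s * exp u) := by
  have himg : (fun u => s * exp u) '' Set.univ = Set.Ioi 0 := by
    rw [Set.image_univ, show (Set.range fun u => s * exp u) = (s * ·) '' Set.range exp from
      Set.range_comp _ _, range_exp, Set.image_mul_left_Ioi hs, mul_zero]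
  rw [← himg, lintegral_image_eq_lintegral_abs_deriv_mul MeasurableSet.univ
    (fun u _ => ((hasDerivAt_exp u).const_mul s).hasDerivWithinAt)
    (fun u _ v _ h => exp_injective (mul_left_cancel₀ hs.ne' h)), setLIntegral_univ]
  simp_rw [abs_of_pos (mul_pos hs (exp_pos _))]

lemma lintegral_exp_mul_sub_mul_cosh (p : ℝ) {c : ℝ} (hc : 0 < c) :
    ∫⁻ u, ENNReal.ofReal (exp (p * u - c * cosh u)) = ENNReal.ofReal (2 * besselK p c) := by
  rw [lintegral_eq_setLIntegral_Ioi_add_comp_neg (by fun_prop), besselK, ← integral_const_mul,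
    ofReal_integral_eq_lintegral_ofReal
      ((integrable_exp_neg_mul_cosh_mul_cosh p hc).const_mul 2).integrableOn
      (ae_of_all _ fun u => by positivity)]
  refine setLIntegral_congr_fun measurableSet_Ioi fun u _ => ?_
  rw [← ENNReal.ofReal_add (exp_pos _).le (exp_pos _).le, cosh_neg, cosh_eq (p * u)]
  simp only [sub_eq_add_neg, exp_add, neg_mul, mul_neg]
  ring_nf

lemma lintegral_rpow_mul_exp_neg_add_div (p : ℝ) {a c : ℝ} (ha : 0 < a) (hc : 0 < c) :
    ∫⁻ w in Set.Ioi 0, ENNReal.ofReal (w ^ (p - 1) * exp (-(a * w + c / w) / 2))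
      = ENNReal.ofReal (2 * (c / a) ^ (p / 2) * besselK p √(a * c)) := by
  set s := √(c / a)
  have hs : 0 < s := sqrt_pos.2 (div_pos hc ha)
  have has : a * s = √(a * c) := by
    rw [eq_comm, sqrt_eq_iff_mul_self_eq_of_pos (by positivity), mul_mul_mul_comm,
      mul_self_sqrt (div_nonneg hc.le ha.le)]
    field_simp
  have hcs : c / s = √(a * c) := by
    rw [← has, div_eq_iff hs.ne', mul_assoc, ← sq, sq_sqrt (div_nonneg hc.le ha.le)]
    field_simp
  have hsp : s ^ p = (c / a) ^ (p / 2) := by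
    rw [show s = (c / a) ^ (1 / 2 : ℝ) from sqrt_eq_rpow _, ← rpow_mul (div_nonneg hc.le ha.le),
      one_div_mul_eq_div]
  have hsub : ∀ u, ENNReal.ofReal (s * exp u) *
      ENNReal.ofReal ((s * exp u) ^ (p - 1) * exp (-(a * (s * exp u) + c / (s * exp u)) / 2))
      = ENNReal.ofReal (s ^ p) * ENNReal.ofReal (exp (p * u - √(a * c) * cosh u)) := by
    intro u
    have hse : 0 < s * exp u := mul_pos hs (exp_pos u)
    rw [← ENNReal.ofReal_mul hse.le, ← ENNReal.ofReal_mul (by positivity)]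
    have hexp : -(a * (s * exp u) + c / (s * exp u)) / 2 = -(√(a * c) * cosh u) := by
      rw [← mul_assoc, has, ← div_div, hcs, cosh_eq, exp_neg]
      ring
    congr 1
    rw [hexp, rpow_sub_one hse.ne', mul_rpow hs.le (exp_pos u).le, ← exp_mul, sub_eq_add_neg,
      exp_add, mul_comm u p]
    field_simp
  simp_rw [setLIntegral_Ioi_eq_lintegral_comp_mul_exp hs, hsub]
  rw [lintegral_const_mul _ (by fun_prop), lintegral_exp_mul_sub_mul_cosh p (by positivity),
    ← ENNReal.ofReal_mul (by positivity), hsp, mul_left_comm, ← mul_assoc]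

lemma exp_mul_sub_sq_div_eq {w : ℝ} (hw : 0 < w) (b y : ℝ) :
    exp (b * y - y ^ 2 / (2 * w))
      = exp (b ^ 2 * w / 2) * exp (-(1 / (2 * w)) * (y - b * w) ^ 2) := by
  rw [← exp_add]
  congr 1
  field_simp
  ring

lemma lintegral_exp_mul_sub_sq_div {w : ℝ} (hw : 0 < w) (b : ℝ) :
    ∫⁻ y, ENNReal.ofReal (exp (b * y - y ^ 2 / (2 * w)))
      = ENNReal.ofReal (√(2 * π * w) * exp (b ^ 2 * w / 2)) := by
  simp_rw [exp_mul_sub_sq_div_eq hw, ENNReal.ofReal_mul (exp_pos _).le]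
  rw [lintegral_const_mul _ (by fun_prop),
    lintegral_sub_right_eq_self (fun y => ENNReal.ofReal (exp (-(1 / (2 * w)) * y ^ 2))),
    ← ofReal_integral_eq_lintegral_ofReal (integrable_exp_neg_mul_sq (by positivity))
      (ae_of_all _ fun _ => (exp_pos _).le),
    integral_gaussian, ← ENNReal.ofReal_mul (exp_pos _).le, mul_comm (exp _)]
  congr 3
  field_simp

noncomputable def ghKernel (lam α δ b y : ℝ) : ℝ :=
  exp (b * y) * (δ ^ 2 + y ^ 2) ^ ((lam - 1 / 2) / 2) *
    besselK (lam - 1 / 2) (α * √(δ ^ 2 + y ^ 2))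

lemma ofReal_rpow_mul_besselK_eq_lintegral (ν : ℝ) {α q : ℝ} (hα : 0 < α) (hq : 0 < q) :
    ENNReal.ofReal (q ^ (ν / 2) * besselK ν (α * √q)) = ENNReal.ofReal (α ^ ν / 2) *
      ∫⁻ w in Set.Ioi 0, ENNReal.ofReal (w ^ (ν - 1) * exp (-(α ^ 2 * w + q / w) / 2)) := by
  have hαν : (α ^ 2) ^ (ν / 2) = α ^ ν := by
    rw [← rpow_natCast, ← rpow_mul hα.le]
    ring_nf
  rw [lintegral_rpow_mul_exp_neg_add_div ν (by positivity) hq, ← ENNReal.ofReal_mul (by positivity),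
    sqrt_mul (sq_nonneg α), sqrt_sq hα.le, div_rpow hq.le (sq_nonneg _), hαν]
  congr 1
  field_simp

lemma lintegral_exp_mul_mul_exp_neg_add_div {w : ℝ} (hw : 0 < w) (a b d : ℝ) :
    ∫⁻ y, ENNReal.ofReal (exp (b * y) * exp (-(a * w + (d + y ^ 2) / w) / 2))
      = ENNReal.ofReal (√(2 * π * w) * exp (-((a - b ^ 2) * w + d / w) / 2)) := by
  have hsplit : ∀ y, exp (b * y) * exp (-(a * w + (d + y ^ 2) / w) / 2)
      = exp (-(a * w + d / w) / 2) * exp (b * y - y ^ 2 / (2 * w)) := by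
    intro y
    rw [← exp_add, ← exp_add]
    congr 1
    field_simp
    ring
  simp_rw [hsplit, ENNReal.ofReal_mul (exp_pos _).le]
  rw [lintegral_const_mul _ (by fun_prop), lintegral_exp_mul_sub_sq_div hw,
    ← ENNReal.ofReal_mul (exp_pos _).le]
  congr 1
  rw [mul_left_comm, ← exp_add]
  congr 2
  field_simp
  ring

lemma lintegral_ghKernel (lam : ℝ) {α δ b : ℝ} (hδ : 0 < δ) (hb : |b| < α) :
    ∫⁻ y, ENNReal.ofReal (ghKernel lam α δ b y) = ENNReal.ofReal (√(2 * π) * α ^ (lam - 1 / 2) *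
      δ ^ lam / (α ^ 2 - b ^ 2) ^ (lam / 2) * besselK lam (δ * √(α ^ 2 - b ^ 2))) := by
  have hα : 0 < α := (abs_nonneg b).trans_lt hb
  have hαb := sq_sub_sq_pos_of_abs_lt hb
  set ν := lam - 1 / 2
  set E : ℝ → ℝ → ℝ := fun y w => exp (b * y) * exp (-(α ^ 2 * w + (δ ^ 2 + y ^ 2) / w) / 2)
  have hmix : ∀ y, ENNReal.ofReal (ghKernel lam α δ b y) = ENNReal.ofReal (α ^ ν / 2) *
      ∫⁻ w in Set.Ioi 0, ENNReal.ofReal (w ^ (ν - 1)) * ENNReal.ofReal (E y w) := by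
    intro y
    rw [ghKernel, mul_assoc, ENNReal.ofReal_mul (exp_pos _).le,
      ofReal_rpow_mul_besselK_eq_lintegral ν hα (by positivity), mul_left_comm,
      ← lintegral_const_mul' _ _ ENNReal.ofReal_ne_top]
    congr 1
    refine setLIntegral_congr_fun measurableSet_Ioi fun w hw => ?_
    rw [← ENNReal.ofReal_mul (exp_pos _).le, ← ENNReal.ofReal_mul (rpow_pos_of_pos hw _).le]
    simp only [E]
    ring_nf
  have hgauss : ∀ w ∈ Set.Ioi (0 : ℝ), ENNReal.ofReal (w ^ (ν - 1)) * ∫⁻ y, ENNReal.ofReal (E y w)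
      = ENNReal.ofReal (√(2 * π)) *
        ENNReal.ofReal (w ^ (lam - 1) * exp (-((α ^ 2 - b ^ 2) * w + δ ^ 2 / w) / 2)) := by
    intro w hw
    have hw : 0 < w := hw
    rw [lintegral_exp_mul_mul_exp_neg_add_div hw, ← ENNReal.ofReal_mul (by positivity),
      ← ENNReal.ofReal_mul (by positivity)]
    congr 1
    rw [sqrt_mul (by positivity), sqrt_eq_rpow w,
      show lam - 1 = (ν - 1) + 1 / 2 by ring, rpow_add hw]
    ring
  calc ∫⁻ y, ENNReal.ofReal (ghKernel lam α δ b y)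
      = ENNReal.ofReal (α ^ ν / 2) *
          ∫⁻ w in Set.Ioi 0, ENNReal.ofReal (w ^ (ν - 1)) * ∫⁻ y, ENNReal.ofReal (E y w) := by
        simp_rw [hmix]
        rw [lintegral_const_mul _ (by fun_prop),
          lintegral_lintegral_swap (by simp only [E]; fun_prop)]
        congr 1
        exact setLIntegral_congr_fun measurableSet_Ioi fun w _ =>
          lintegral_const_mul _ (by simp only [E]; fun_prop)
    _ = ENNReal.ofReal (α ^ ν / 2) * ENNReal.ofReal (√(2 * π)) *
          ENNReal.ofReal (2 * (δ ^ 2 / (α ^ 2 - b ^ 2)) ^ (lam / 2) *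
            besselK lam √((α ^ 2 - b ^ 2) * δ ^ 2)) := by
        rw [setLIntegral_congr_fun measurableSet_Ioi hgauss, lintegral_const_mul _ (by fun_prop),
          lintegral_rpow_mul_exp_neg_add_div lam hαb (by positivity), ← mul_assoc]
    _ = _ := by
        rw [← ENNReal.ofReal_mul (by positivity), ← ENNReal.ofReal_mul (by positivity),
          sqrt_mul hαb.le, sqrt_sq hδ.le, div_rpow (by positivity) hαb.le, ← rpow_natCast,
          ← rpow_mul hδ.le]
        congr 1
        ring_nf

lemma ghKernel_nonneg (lam α δ b y : ℝ) : 0 ≤ ghKernel lam α δ b y := by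
  have := besselK_nonneg (lam - 1 / 2) (α * √(δ ^ 2 + y ^ 2))
  unfold ghKernel
  positivity

lemma measurable_ghKernel (lam α δ b : ℝ) : Measurable (ghKernel lam α δ b) := by
  have := measurable_besselK (lam - 1 / 2)
  unfold ghKernel
  fun_prop

lemma integral_ghKernel (lam : ℝ) {α δ b : ℝ} (hδ : 0 < δ) (hb : |b| < α) :
    ∫ y, ghKernel lam α δ b y = √(2 * π) * α ^ (lam - 1 / 2) * δ ^ lam /
      (α ^ 2 - b ^ 2) ^ (lam / 2) * besselK lam (δ * √(α ^ 2 - b ^ 2)) := by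
  have hα : 0 < α := (abs_nonneg b).trans_lt hb
  have hαb := sq_sub_sq_pos_of_abs_lt hb
  have := besselK_nonneg lam (δ * √(α ^ 2 - b ^ 2))
  rw [integral_eq_lintegral_of_nonneg_ae (ae_of_all _ (ghKernel_nonneg lam α δ b))
    (measurable_ghKernel lam α δ b).aestronglyMeasurable, lintegral_ghKernel lam hδ hb,
    ENNReal.toReal_ofReal (by positivity)]

lemma exp_mul_mul_ghPdf (lam α β δ μ t x : ℝ) :
    exp (t * x) * ghPdf lam α β δ μ x = exp (μ * t) * ((α ^ 2 - β ^ 2) ^ (lam / 2) /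
      (√(2 * π) * α ^ (lam - 1 / 2) * δ ^ lam * besselK lam (δ * √(α ^ 2 - β ^ 2)))) *
      ghKernel lam α δ (β + t) (x - μ) := by
  rw [ghPdf, ghKernel, show (β + t) * (x - μ) = t * x - μ * t + β * (x - μ) by ring, exp_add,
    exp_sub]
  field_simp

theorem stmt11 (lam α β δ μ t : ℝ) (hδ : 0 < δ) (hαβ : |β| < α) (ht : |β + t| < α) :
    ∫ x : ℝ, Real.exp (t * x) * ghPdf lam α β δ μ x
      = Real.exp (μ * t) * (Real.sqrt (α ^ 2 - β ^ 2)) ^ lam /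
          (α ^ 2 - (β + t) ^ 2) ^ (lam / 2) *
        (besselK lam (δ * Real.sqrt (α ^ 2 - (β + t) ^ 2)) /
          besselK lam (δ * Real.sqrt (α ^ 2 - β ^ 2))) := by
  have hα : 0 < α := (abs_nonneg β).trans_lt hαβ
  have hγ := sq_sub_sq_pos_of_abs_lt hαβ
  have hγ_rpow : √(α ^ 2 - β ^ 2) ^ lam = (α ^ 2 - β ^ 2) ^ (lam / 2) := by
    rw [sqrt_eq_rpow, ← rpow_mul hγ.le, one_div_mul_eq_div]
  simp_rw [exp_mul_mul_ghPdf lam α β δ μ t]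
  rw [integral_const_mul, integral_sub_right_eq_self (ghKernel lam α δ (β + t)),
    integral_ghKernel lam hδ ht, hγ_rpow]
  field_simp
end

section
/- The scaled and shifted Student's t density p_t(x) = (Γ((ν+1)/2)/(√(πδ²)Γ(ν/2)))·(1 + (x−μ)²/δ²)^{−(ν+1)/2} satisfies, for every continuously differentiable g with E|((X−μ)²+δ²)g'(X)| < ∞ and E|(X−μ)g(X)| < ∞ where X has density p_t: E[((X−μ)² + δ²)g'(X) − (ν−1)(X−μ)g(X)] = 0, provided g and g' are bounded. -/
open Real MeasureTheory Filter Asymptotics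

/-- Density of the scaled and shifted Student's t-distribution. -/
noncomputable def studentPdf (ν δ μ x : ℝ) : ℝ :=
  (Real.Gamma ((ν + 1) / 2) / (Real.sqrt (Real.pi * δ ^ 2) * Real.Gamma (ν / 2))) *
    (1 + (x - μ) ^ 2 / δ ^ 2) ^ (-((ν + 1) / 2))

/-!
With `q x = (x - μ) ^ 2 + δ ^ 2`, the density satisfies `q p' = -(ν + 1) (x - μ) p`, so the
integrand is the derivative of `F = q g p`. As a primitive of an integrable function, `F` has
limits at `±∞`; they vanish because `F · (log q)' = 2 (x - μ) g p` is integrable, while `(log q)'`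
is not integrable near `±∞`.
-/

open Set Topology

/-- A limit `L ≠ 0` would make `φ'` a big-O of `F * φ'`, which is integrable near `l`, while
`φ'` is not, since its primitive `φ` is unbounded along `l`. -/
theorem eq_zero_of_tendsto_of_integrableAtFilter_mul_deriv {l : Filter ℝ} [NeBot l]
    [TendstoIxxClass Icc l l] {F φ φ' : ℝ → ℝ} {L : ℝ} (hF : Tendsto F l (𝓝 L))
    (hφ : ∀ᶠ x in l, HasDerivAt φ (φ' x) x) (hφ_top : Tendsto (fun x => ‖φ x‖) l atTop)
    (hint : IntegrableAtFilter (fun x => F x * φ' x) l) : L = 0 := by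
  by_contra hL
  have hFne : ∀ᶠ x in l, F x ≠ 0 := hF.eventually_ne hL
  have hφ'_isBigO : deriv φ =O[l] fun x => F x * φ' x := by
    have h := ((hF.inv₀ hL).isBigO_one ℝ).mul (isBigO_refl (fun x => F x * φ' x) l)
    refine (h.congr' ?_ ?_).trans (isBigO_refl _ _)
    · filter_upwards [hFne, hφ] with x hx hφx
      rw [hφx.deriv, inv_mul_cancel_left₀ hx]
    · simp only [one_mul, EventuallyEq.rfl]
  obtain ⟨s, hs, hints⟩ := hint
  exact not_integrableOn_of_tendsto_norm_atTop_of_deriv_isBigO_filter l hs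
    (hφ.mono fun x hx => hx.differentiableAt) hφ_top hφ'_isBigO hints

theorem tendsto_norm_log_sub_sq_add_sq_cocompact (μ δ : ℝ) :
    Tendsto (fun x => ‖log ((x - μ) ^ 2 + δ ^ 2)‖) (cocompact ℝ) atTop := by
  have hq : Tendsto (fun x => (x - μ) ^ 2 + δ ^ 2) (cocompact ℝ) atTop := by
    refine tendsto_atTop_add_const_right _ _ ?_
    simpa only [Function.comp_def, Real.dist_eq, sq_abs] using
      (tendsto_pow_atTop two_ne_zero).comp (tendsto_dist_right_cocompact_atTop μ)
  exact tendsto_norm_atTop_atTop.comp (tendsto_log_atTop.comp hq)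

theorem hasDerivAt_sub_sq_add_sq (μ δ x : ℝ) :
    HasDerivAt (fun x => (x - μ) ^ 2 + δ ^ 2) (2 * (x - μ)) x := by
  simpa using (((hasDerivAt_id x).sub_const μ).pow 2).add_const (δ ^ 2)

theorem hasDerivAt_log_sub_sq_add_sq {δ : ℝ} (hδ : δ ≠ 0) (μ x : ℝ) :
    HasDerivAt (fun x => log ((x - μ) ^ 2 + δ ^ 2)) (2 * (x - μ) / ((x - μ) ^ 2 + δ ^ 2)) x :=
  (hasDerivAt_sub_sq_add_sq μ δ x).log (by positivity)

theorem hasDerivAt_studentPdf (ν : ℝ) {δ : ℝ} (hδ : δ ≠ 0) (μ x : ℝ) :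
    HasDerivAt (studentPdf ν δ μ)
      (-(ν + 1) * (x - μ) / ((x - μ) ^ 2 + δ ^ 2) * studentPdf ν δ μ x) x := by
  have hb : HasDerivAt (fun y : ℝ => 1 + (y - μ) ^ 2 / δ ^ 2) (2 * (x - μ) / δ ^ 2) x := by
    simpa using ((((hasDerivAt_id x).sub_const μ).pow 2).div_const (δ ^ 2)).const_add 1
  have hb0 : 0 < 1 + (x - μ) ^ 2 / δ ^ 2 := by positivity
  refine ((hb.rpow_const (Or.inl hb0.ne')).const_mul _).congr_deriv ?_
  rw [studentPdf, rpow_sub hb0, rpow_one]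
  field_simp
  ring

theorem hasDerivAt_sq_add_sq_mul_mul_studentPdf (ν : ℝ) {δ : ℝ} (hδ : δ ≠ 0) (μ : ℝ)
    {g : ℝ → ℝ} {g' x : ℝ} (hg : HasDerivAt g g' x) :
    HasDerivAt (fun x => ((x - μ) ^ 2 + δ ^ 2) * g x * studentPdf ν δ μ x)
      ((((x - μ) ^ 2 + δ ^ 2) * g' - (ν - 1) * (x - μ) * g x) * studentPdf ν δ μ x) x := by
  refine (((hasDerivAt_sub_sq_add_sq μ δ x).fun_mul hg).fun_mul (hasDerivAt_studentPdf ν hδ μ x)).congr_deriv ?_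
  have hq0 : (x - μ) ^ 2 + δ ^ 2 ≠ 0 := by positivity
  field_simp
  ring

theorem stmt16_general (ν δ μ : ℝ) (hδ : 0 < δ) (g : ℝ → ℝ)
    (hg : Differentiable ℝ g)
    (hint1 : Integrable (fun x => ((x - μ) ^ 2 + δ ^ 2) * deriv g x * studentPdf ν δ μ x))
    (hint2 : Integrable (fun x => (x - μ) * g x * studentPdf ν δ μ x)) :
    ∫ x : ℝ, (((x - μ) ^ 2 + δ ^ 2) * deriv g x - (ν - 1) * (x - μ) * g x) *
        studentPdf ν δ μ x = 0 := by
  set F : ℝ → ℝ := fun x => ((x - μ) ^ 2 + δ ^ 2) * g x * studentPdf ν δ μ x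
  have hF' (x : ℝ) := hasDerivAt_sq_add_sq_mul_mul_studentPdf ν hδ.ne' μ (hg x).hasDerivAt
  have hint : Integrable fun x =>
      (((x - μ) ^ 2 + δ ^ 2) * deriv g x - (ν - 1) * (x - μ) * g x) * studentPdf ν δ μ x := by
    refine (hint1.sub (hint2.const_mul (ν - 1))).congr (ae_of_all _ fun x => ?_)
    simp only [Pi.sub_apply]
    ring
  have hlim_eq_zero (l : Filter ℝ) [NeBot l] [TendstoIxxClass Icc l l] (hl : l ≤ cocompact ℝ)
      {L : ℝ} (hL : Tendsto F l (𝓝 L)) : L = 0 := by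
    refine eq_zero_of_tendsto_of_integrableAtFilter_mul_deriv hL
      (Eventually.of_forall (hasDerivAt_log_sub_sq_add_sq hδ.ne' μ))
      ((tendsto_norm_log_sub_sq_add_sq_cocompact μ δ).mono_left hl)
      (((hint2.const_mul 2).congr (ae_of_all _ fun x => ?_)).integrableAtFilter l)
    have hq0 : (x - μ) ^ 2 + δ ^ 2 ≠ 0 := by positivity
    field_simp
    ring
  have hbot := tendsto_limUnder_of_hasDerivAt_of_integrableOn_Iic (a := 0) (fun x _ => hF' x)
    hint.integrableOn
  have htop := tendsto_limUnder_of_hasDerivAt_of_integrableOn_Ioi (a := 0) (fun x _ => hF' x)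
    hint.integrableOn
  rw [integral_of_hasDerivAt_of_tendsto hF' hint hbot htop,
    hlim_eq_zero atBot atBot_le_cocompact hbot, hlim_eq_zero atTop atTop_le_cocompact htop, sub_zero]

theorem stmt16 (ν δ μ : ℝ) (hν : 0 < ν) (hδ : 0 < δ) (g : ℝ → ℝ)
    (hg : Differentiable ℝ g)
    (hgbdd : ∃ M, ∀ x, |g x| ≤ M) (hg'bdd : ∃ M, ∀ x, |deriv g x| ≤ M)
    (hint1 : Integrable (fun x => ((x - μ) ^ 2 + δ ^ 2) * deriv g x * studentPdf ν δ μ x))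
    (hint2 : Integrable (fun x => (x - μ) * g x * studentPdf ν δ μ x)) :
    ∫ x : ℝ, (((x - μ) ^ 2 + δ ^ 2) * deriv g x - (ν - 1) * (x - μ) * g x) *
        studentPdf ν δ μ x = 0 :=
  stmt16_general ν δ μ hδ g hg hint1 hint2
end
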